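/- For every φ ∈ 𝒜*, if the functional φ∘μ ∈ (𝒜⊗𝒜)* (where μ : 𝒜⊗𝒜 → 𝒜 is the multiplication map) is written as φ∘μ = Σᵢ ψᵢ⊗χᵢ with ψᵢ, χᵢ ∈ 𝒜*, then as linear endomorphisms of 𝒜⊗𝒜 one has W⁻¹ ∘ (id⊗𝒢(φ)) ∘ W = Σᵢ 𝒢(ψᵢ)⊗𝒢(χᵢ). (This says that the dual comultiplication Δ̂ on the dual quantum group is implemented by W via Δ̂(x) = W*(1⊗x)W.) -/
import Mathlib


/- Setting: a finite quantum group `A`; `W (a ⊗ b) = Δ(a)(1 ⊗ b)` is invertible and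
`𝒢(φ)(x) = (id ⊗ φ)(Δ(x))`.
STATEMENT 8: if `φ ∘ μ = Σᵢ ψᵢ ⊗ χᵢ` (i.e. `φ(x y) = Σᵢ ψᵢ(x) χᵢ(y)`), then
`W⁻¹ ∘ (id ⊗ 𝒢(φ)) ∘ W = Σᵢ 𝒢(ψᵢ) ⊗ 𝒢(χᵢ)` as endomorphisms of `A ⊗ A`
(the dual comultiplication is implemented by `W`). -/

open scoped TensorProduct ComplexOrder
open TensorProduct

section
variable {A : Type*} [Ring A] [HopfAlgebra ℂ A] [StarRing A] [StarModule ℂ A]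
  [FiniteDimensional ℂ A]

/-- The multiplicative unitary `W : a ⊗ b ↦ Δ(a)(1 ⊗ b)`. -/
noncomputable def Wmap : A ⊗[ℂ] A →ₗ[ℂ] A ⊗[ℂ] A :=
  LinearMap.mul' ℂ (A ⊗[ℂ] A) ∘ₗ
    TensorProduct.map (Coalgebra.comul (R := ℂ)) (TensorProduct.mk ℂ A A 1)

/-- `𝒢(φ) = (id ⊗ φ) ∘ Δ : A → A`. -/
noncomputable def Gmap (φ : A →ₗ[ℂ] ℂ) : A →ₗ[ℂ] A :=
  (TensorProduct.rid ℂ A).toLinearMap ∘ₗ TensorProduct.map LinearMap.id φ ∘ₗ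
    Coalgebra.comul (R := ℂ)

lemma Wmap_tmul (a b : A) :
    Wmap (a ⊗ₜ[ℂ] b) = Coalgebra.comul (R := ℂ) a * ((1 : A) ⊗ₜ[ℂ] b) := by
  simp [Wmap]

lemma Gmap_apply (φ : A →ₗ[ℂ] ℂ) (a : A) :
    Gmap φ a = TensorProduct.rid ℂ A
      (TensorProduct.map LinearMap.id φ (Coalgebra.comul (R := ℂ) a)) := rfl

lemma comul_Gmap (ψ : A →ₗ[ℂ] ℂ) (a : A) :
    Coalgebra.comul (R := ℂ) (Gmap ψ a) =
      TensorProduct.map LinearMap.id (Gmap ψ) (Coalgebra.comul (R := ℂ) a) := by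
  set F : ((A ⊗[ℂ] A) ⊗[ℂ] A) →ₗ[ℂ] (A ⊗[ℂ] A) :=
    (TensorProduct.rid ℂ (A ⊗[ℂ] A)).toLinearMap ∘ₗ TensorProduct.map LinearMap.id ψ with hF
  set G : (A ⊗[ℂ] (A ⊗[ℂ] A)) →ₗ[ℂ] (A ⊗[ℂ] A) :=
    TensorProduct.map LinearMap.id
      ((TensorProduct.rid ℂ A).toLinearMap ∘ₗ TensorProduct.map LinearMap.id ψ) with hG
  have hA : ∀ c : A ⊗[ℂ] A,
      Coalgebra.comul (R := ℂ) (TensorProduct.rid ℂ A (TensorProduct.map LinearMap.id ψ c)) =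
        F ((Coalgebra.comul (R := ℂ)).rTensor A c) := by
    intro c
    induction c using TensorProduct.induction_on with
    | zero => simp
    | tmul x y => simp [hF]
    | add u v hu hv => simp [map_add, hu, hv]
  have hB : ∀ c : A ⊗[ℂ] A,
      TensorProduct.map LinearMap.id (Gmap ψ) c =
        G ((Coalgebra.comul (R := ℂ)).lTensor A c) := by
    intro c
    induction c using TensorProduct.induction_on with
    | zero => simp
    | tmul x y => simp [hG, Gmap_apply]
    | add u v hu hv => simp [map_add, hu, hv]
  have hC : ∀ z : A ⊗[ℂ] (A ⊗[ℂ] A), F ((TensorProduct.assoc ℂ A A A).symm z) = G z := by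
    intro z
    induction z using TensorProduct.induction_on with
    | zero => rw [LinearEquiv.map_zero, map_zero, map_zero]
    | tmul x w =>
      induction w using TensorProduct.induction_on with
      | zero => rw [TensorProduct.tmul_zero, LinearEquiv.map_zero, map_zero, map_zero]
      | tmul u v => simp [hF, hG, TensorProduct.smul_tmul']
      | add u v hu hv => simp only [TensorProduct.tmul_add, map_add, hu, hv]
    | add u v hu hv => simp [map_add, hu, hv]
  calc Coalgebra.comul (R := ℂ) (Gmap ψ a)
      = F ((Coalgebra.comul (R := ℂ)).rTensor A (Coalgebra.comul (R := ℂ) a)) := hA _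
    _ = F ((TensorProduct.assoc ℂ A A A).symm
          ((Coalgebra.comul (R := ℂ)).lTensor A (Coalgebra.comul (R := ℂ) a))) := by
        rw [Coalgebra.coassoc_symm_apply]
    _ = G ((Coalgebra.comul (R := ℂ)).lTensor A (Coalgebra.comul (R := ℂ) a)) := hC _
    _ = TensorProduct.map LinearMap.id (Gmap ψ) (Coalgebra.comul (R := ℂ) a) := (hB _).symm

theorem dual_comul_implemented_by_W
    -- `A` admits a faithful positive functional
    (f : A →ₗ[ℂ] ℂ)
    (f_pos : ∀ a : A, 0 ≤ f (star a * a))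
    (f_faithful : ∀ a : A, f (star a * a) = 0 → a = 0)
    -- `Winv` is the inverse of `W`
    (Winv : A ⊗[ℂ] A →ₗ[ℂ] A ⊗[ℂ] A)
    (hWinv₁ : Winv ∘ₗ Wmap = LinearMap.id)
    (hWinv₂ : Wmap ∘ₗ Winv = LinearMap.id)
    -- `φ ∘ μ = Σᵢ ψᵢ ⊗ χᵢ`
    (φ : A →ₗ[ℂ] ℂ) (n : ℕ) (ψ χ : Fin n → (A →ₗ[ℂ] ℂ))
    (hdecomp : ∀ x y : A, φ (x * y) = ∑ i : Fin n, ψ i x * χ i y) :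
    Winv ∘ₗ TensorProduct.map LinearMap.id (Gmap φ) ∘ₗ Wmap =
      ∑ i : Fin n, TensorProduct.map (Gmap (ψ i)) (Gmap (χ i)) := by
  -- the multiplicativity identity `𝒢(φ)(y b) = Σᵢ 𝒢(ψᵢ)(y) 𝒢(χᵢ)(b)`
  have Gmul : ∀ y b : A, Gmap φ (y * b) = ∑ i : Fin n, Gmap (ψ i) y * Gmap (χ i) b := by
    intro y b
    have key : ∀ cy cb : A ⊗[ℂ] A,
        TensorProduct.rid ℂ A (TensorProduct.map LinearMap.id φ (cy * cb)) =
          ∑ i : Fin n, TensorProduct.rid ℂ A (TensorProduct.map LinearMap.id (ψ i) cy) *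
            TensorProduct.rid ℂ A (TensorProduct.map LinearMap.id (χ i) cb) := by
      intro cy cb
      induction cy using TensorProduct.induction_on with
      | zero => simp
      | tmul p q =>
        induction cb using TensorProduct.induction_on with
        | zero => simp
        | tmul u v =>
          simp only [Algebra.TensorProduct.tmul_mul_tmul, TensorProduct.map_tmul,
            LinearMap.id_coe, id_eq, TensorProduct.rid_tmul, hdecomp, Finset.sum_smul,
            smul_mul_assoc, mul_smul_comm, smul_smul, mul_comm]
        | add u v hu hv =>
          simp only [mul_add, map_add, hu, hv, ← Finset.sum_add_distrib, mul_add]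
      | add u v hu hv =>
        simp only [add_mul, map_add, hu, hv, ← Finset.sum_add_distrib, add_mul]
    simpa only [Gmap_apply, Bialgebra.comul_mul] using
      key (Coalgebra.comul (R := ℂ) y) (Coalgebra.comul (R := ℂ) b)
  have key : TensorProduct.map LinearMap.id (Gmap φ) ∘ₗ Wmap =
      Wmap ∘ₗ ∑ i : Fin n, TensorProduct.map (Gmap (ψ i)) (Gmap (χ i)) := by
    apply TensorProduct.ext'
    intro a b
    have main : ∀ c : A ⊗[ℂ] A,
        TensorProduct.map LinearMap.id (Gmap φ) (c * ((1 : A) ⊗ₜ[ℂ] b)) =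
          ∑ i : Fin n, (TensorProduct.map LinearMap.id (Gmap (ψ i)) c) *
            ((1 : A) ⊗ₜ[ℂ] Gmap (χ i) b) := by
      intro c
      induction c using TensorProduct.induction_on with
      | zero => simp
      | tmul x y =>
        simp only [Algebra.TensorProduct.tmul_mul_tmul, TensorProduct.map_tmul,
          LinearMap.id_coe, id_eq, mul_one, one_mul, Gmul, TensorProduct.tmul_sum]
      | add u v hu hv =>
        simp only [add_mul, map_add, hu, hv, ← Finset.sum_add_distrib]
    calc (TensorProduct.map LinearMap.id (Gmap φ) ∘ₗ Wmap) (a ⊗ₜ[ℂ] b)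
        = TensorProduct.map LinearMap.id (Gmap φ)
            (Coalgebra.comul (R := ℂ) a * ((1 : A) ⊗ₜ[ℂ] b)) := by
          rw [LinearMap.comp_apply, Wmap_tmul]
      _ = ∑ i : Fin n, (TensorProduct.map LinearMap.id (Gmap (ψ i))
            (Coalgebra.comul (R := ℂ) a)) * ((1 : A) ⊗ₜ[ℂ] Gmap (χ i) b) := main _
      _ = ∑ i : Fin n, Coalgebra.comul (R := ℂ) (Gmap (ψ i) a) *
            ((1 : A) ⊗ₜ[ℂ] Gmap (χ i) b) := by
          simp only [comul_Gmap]
      _ = (Wmap ∘ₗ ∑ i : Fin n, TensorProduct.map (Gmap (ψ i)) (Gmap (χ i)))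
            (a ⊗ₜ[ℂ] b) := by
          simp only [LinearMap.comp_apply, LinearMap.sum_apply, map_sum,
            TensorProduct.map_tmul, Wmap_tmul]
  calc Winv ∘ₗ TensorProduct.map LinearMap.id (Gmap φ) ∘ₗ Wmap
      = (Winv ∘ₗ Wmap) ∘ₗ ∑ i : Fin n, TensorProduct.map (Gmap (ψ i)) (Gmap (χ i)) := by
        rw [key, LinearMap.comp_assoc]
    _ = ∑ i : Fin n, TensorProduct.map (Gmap (ψ i)) (Gmap (χ i)) := by
        rw [hWinv₁, LinearMap.id_comp]

end
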